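/- Consider the adaptive group testing model where only defects matter, with the genie construction of 𝓛 and 𝒦, and an estimator K̂ = K̂(Y_1,…,Y_T). Then I(𝒦 : K̂ ∣ 𝓛) ≤ Σ_{t=1}^{T} I( X_{𝒦∖𝓛,t} : Y_t ∣ X_{𝓛,t} ), where I denotes (conditional) mutual information. -/

import Mathlib

open Finset Real
open scoped Classical

noncomputable section

/-- The probability of an event `E` under a pmf `μ` on a finite sample space. -/
def prb {Ω : Type*} [Fintype Ω] (μ : Ω → ℝ) (E : Ω → Prop) : ℝ :=
  ∑ ω, if E ω then μ ω else 0

/-- `μ` is a probability mass function. -/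
def IsPmf {Ω : Type*} [Fintype Ω] (μ : Ω → ℝ) : Prop :=
  (∀ ω, 0 ≤ μ ω) ∧ ∑ ω, μ ω = 1

/-- The conditional pmf of `μ` given the event `E`. -/
def condPmf {Ω : Type*} [Fintype Ω] (μ : Ω → ℝ) (E : Ω → Prop) : Ω → ℝ :=
  fun ω => (if E ω then μ ω else 0) / prb μ E

/-- Shannon entropy (base-2 logarithms) of a probability mass function on a finite set. -/
def entPmf {α : Type*} [Fintype α] (p : α → ℝ) : ℝ :=
  - ∑ a : α, p a * Real.logb 2 (p a)

/-- Shannon entropy (base-2) of the random variable `X` under the pmf `μ`. -/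
def ent {Ω α : Type*} [Fintype Ω] [Fintype α] (μ : Ω → ℝ) (X : Ω → α) : ℝ :=
  - ∑ a : α, prb μ (fun ω => X ω = a) * Real.logb 2 (prb μ (fun ω => X ω = a))

/-- Conditional Shannon entropy `H(X ∣ Z) = Σ_z P(Z = z) · H(X ∣ Z = z)`. -/
def condEnt {Ω α γ : Type*} [Fintype Ω] [Fintype α] (μ : Ω → ℝ) (X : Ω → α) (Z : Ω → γ) : ℝ :=
  ∑ z ∈ Finset.univ.image Z,
    prb μ (fun ω => Z ω = z) * ent (condPmf μ (fun ω => Z ω = z)) X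

/-- Mutual information `I(X : Y) = H(X) + H(Y) − H(X,Y)` (base-2). -/
def mutInfo {Ω α β : Type*} [Fintype Ω] [Fintype α] [Fintype β]
    (μ : Ω → ℝ) (X : Ω → α) (Y : Ω → β) : ℝ :=
  ent μ X + ent μ Y - ent μ (fun ω => (X ω, Y ω))

/-- Conditional mutual information `I(X : Y ∣ Z) = Σ_z P(Z = z) · I(X : Y ∣ Z = z)`. -/
def condMutInfo {Ω α β γ : Type*} [Fintype Ω] [Fintype α] [Fintype β]
    (μ : Ω → ℝ) (X : Ω → α) (Y : Ω → β) (Z : Ω → γ) : ℝ :=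
  ∑ z ∈ Finset.univ.image Z,
    prb μ (fun ω => Z ω = z) * mutInfo (condPmf μ (fun ω => Z ω = z)) X Y

/-- The `K`-element subsets of `{1, …, N}`. -/
abbrev KSets (N K : ℕ) := {S : Finset (Fin N) // S.card = K}

/-- The outcomes of the tests before test `t`. -/
def prevOut {T : ℕ} {Y : Type*} (y : Fin T → Y) (t : Fin T) : Fin t.val → Y :=
  fun s => y ⟨s.val, s.isLt.trans t.isLt⟩

/-- `numDef x S y t` is `k_t`: the number of defective items (members of `S`) in the pool of
test `t`, when the adaptive strategy `x` is used and the test outcomes are `y`. -/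
def numDef {N T : ℕ} {Y : Type*} (x : (t : Fin T) → (Fin t.val → Y) → Fin N → Bool)
    (S : Finset (Fin N)) (y : Fin T → Y) (t : Fin T) : ℕ :=
  (S.filter (fun i => x t (prevOut y t) i = true)).card

/-- The joint pmf of the defective set `𝒦` (uniform over `K`-subsets of `{1,…,N}`) and the
test outcomes `Y_1, …, Y_T` of the adaptive strategy `x`, in the model where only defects
matter: conditionally on `𝒦` and the previous outcomes, `Y_t` has distribution `ν (k_t)`. -/
def gtPmf (N K T : ℕ) (Y : Type*) [Fintype Y] (ν : ℕ → Y → ℝ)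
    (x : (t : Fin T) → (Fin t.val → Y) → Fin N → Bool) :
    KSets N K × (Fin T → Y) → ℝ :=
  fun ω => (1 / (N.choose K : ℝ)) * ∏ t : Fin T, ν (numDef x ω.1.val ω.2 t) (ω.2 t)

/-- The joint pmf of the genie construction: `𝓛` uniform over `ℓ`-subsets of `{1,…,N}`;
conditionally on `𝓛`, the defective set `𝒦` uniform over the `K`-subsets containing `𝓛`;
and the test outcomes of the adaptive strategy `x`, in the model where only defects matter. -/
def geniePmf (N K L T : ℕ) (Y : Type*) [Fintype Y] (ν : ℕ → Y → ℝ)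
    (x : (t : Fin T) → (Fin t.val → Y) → Fin N → Bool) :
    KSets N L × KSets N K × (Fin T → Y) → ℝ :=
  fun ω =>
    (if ω.1.val ⊆ ω.2.1.val then
      (1 / (N.choose L : ℝ)) * (1 / ((N - L).choose (K - L) : ℝ))
    else 0) * ∏ t : Fin T, ν (numDef x ω.2.1.val ω.2.2 t) (ω.2.2 t)

/-- `XS S v` records the pair `(S, (v_i)_{i ∈ S})`: the set `S` together with the
restriction of `v` to `S`. -/
def XS {N : ℕ} (S : Finset (Fin N)) (v : Fin N → Bool) :
    Finset (Fin N) × (Fin N → Option Bool) :=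
  (S, fun i => if i ∈ S then some (v i) else none)

end

/-! Since `K̂` is a function of the outcomes, data processing bounds `I(𝒦 : K̂ ∣ 𝓛)` by
`I(𝒦 : Y ∣ 𝓛)`, which the chain rule splits into the terms `I(𝒦 : Y_t ∣ 𝓛, Y_{<t})`. In each
term, passing from the condition `(𝓛, Y_{<t})` to the coarser `X_{𝓛,t}` can only increase
`H(Y_t ∣ ·)`, while `H(Y_t ∣ 𝒦, 𝓛, Y_{<t}) = H(Y_t ∣ X_{𝒦∖𝓛,t}, X_{𝓛,t})`: given
`(𝒦, 𝓛, Y_{<t})` the outcome `Y_t` has law `ν k_t`, and on `𝓛 ⊆ 𝒦` the number `k_t` of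
defectives in the pool is already determined by the two restricted pools. -/

section Entropy

variable {Ω α β γ δ ε : Type*} [Fintype Ω] {μ : Ω → ℝ}

lemma prb_congr {E F : Ω → Prop} (h : ∀ ω, E ω ↔ F ω) : prb μ E = prb μ F := by
  simp only [prb, h]

lemma prb_nonneg (hμ : ∀ ω, 0 ≤ μ ω) (E : Ω → Prop) : 0 ≤ prb μ E :=
  sum_nonneg fun ω _ => by split_ifs <;> simp [hμ ω]

lemma le_prb (hμ : ∀ ω, 0 ≤ μ ω) {E : Ω → Prop} {ω : Ω} (hω : E ω) : μ ω ≤ prb μ E := by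
  unfold prb
  simpa [hω] using single_le_sum (f := fun ω => if E ω then μ ω else 0)
    (fun ω _ => by split_ifs <;> simp [hμ ω]) (mem_univ ω)

lemma prb_pos (hμ : ∀ ω, 0 ≤ μ ω) {E : Ω → Prop} {ω : Ω} (hω : E ω) (hμω : μ ω ≠ 0) :
    0 < prb μ E :=
  (lt_of_le_of_ne (hμ ω) hμω.symm).trans_le (le_prb hμ hω)

lemma sum_prb_and [Fintype γ] (W : Ω → γ) (E : Ω → Prop) :
    ∑ w, prb μ (fun ω => W ω = w ∧ E ω) = prb μ E := by
  unfold prb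
  rw [sum_comm]
  refine sum_congr rfl fun ω _ => ?_
  by_cases hE : E ω <;> simp [hE]

lemma sum_mul_comp [Fintype γ] (W : Ω → γ) (g : γ → ℝ) :
    ∑ ω, μ ω * g (W ω) = ∑ w, prb μ (fun ω => W ω = w) * g w := by
  simp only [prb, sum_mul, ite_mul, zero_mul]
  rw [sum_comm]
  simp [sum_ite_eq]

lemma sum_prb_eq_one [Fintype γ] (hμ : IsPmf μ) (W : Ω → γ) :
    ∑ w, prb μ (fun ω => W ω = w) = 1 := by
  simpa [hμ.2] using (sum_mul_comp (μ := μ) W fun _ => 1).symm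

lemma ent_eq_sum [Fintype α] (X : Ω → α) :
    ent μ X = -∑ ω, μ ω * logb 2 (prb μ fun ω' => X ω' = X ω) := by
  rw [ent, sum_mul_comp X fun a => logb 2 (prb μ fun ω' => X ω' = a)]

lemma ent_congr [Fintype α] [Fintype β] {X : Ω → α} {X' : Ω → β}
    (h : ∀ ω ω', X ω = X ω' ↔ X' ω = X' ω') : ent μ X = ent μ X' := by
  simp only [ent_eq_sum, prb_congr fun ω' => h ω' _]

lemma prb_condPmf (E F : Ω → Prop) :
    prb (condPmf μ E) F = prb μ (fun ω => E ω ∧ F ω) / prb μ E := by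
  simp only [prb, condPmf, sum_div]
  refine sum_congr rfl fun ω _ => ?_
  by_cases hE : E ω <;> by_cases hF : F ω <;> simp [hE, hF]

lemma isPmf_condPmf (hμ : ∀ ω, 0 ≤ μ ω) {E : Ω → Prop} (hE : prb μ E ≠ 0) :
    IsPmf (condPmf μ E) := by
  refine ⟨fun ω => div_nonneg ?_ (prb_nonneg hμ E), ?_⟩
  · split_ifs <;> simp [hμ ω]
  · simp only [condPmf, ← sum_div]
    exact div_self hE

lemma mul_ent_condPmf [Fintype α] (hμ : ∀ ω, 0 ≤ μ ω) (E : Ω → Prop) (X : Ω → α) :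
    prb μ E * ent (condPmf μ E) X
      = -∑ ω, if E ω then
          μ ω * (logb 2 (prb μ fun ω' => E ω' ∧ X ω' = X ω) - logb 2 (prb μ E)) else 0 := by
  rw [ent_eq_sum, mul_neg, mul_sum]
  refine congrArg _ (sum_congr rfl fun ω _ => ?_)
  by_cases hE : E ω
  · by_cases hμω : μ ω = 0
    · simp [condPmf, hE, hμω]
    have hEX := prb_pos hμ (E := fun ω' => E ω' ∧ X ω' = X ω) ⟨hE, rfl⟩ hμω
    have hE' := prb_pos hμ hE hμω
    rw [prb_condPmf, logb_div hEX.ne' hE'.ne']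
    simp only [condPmf, hE, if_true]
    field_simp
  · simp [condPmf, hE]

lemma condEnt_eq_ent_sub_ent [Fintype α] [Fintype γ] (hμ : ∀ ω, 0 ≤ μ ω) (X : Ω → α)
    (Z : Ω → γ) : condEnt μ X Z = ent μ (fun ω => (X ω, Z ω)) - ent μ Z := by
  simp only [condEnt, mul_ent_condPmf hμ, sum_neg_distrib]
  rw [sum_comm]
  simp only [sum_ite_eq, mem_image_of_mem Z (mem_univ _), if_true]
  rw [ent_eq_sum, ent_eq_sum, neg_sub_neg, ← sum_sub_distrib, ← sum_neg_distrib]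
  refine sum_congr rfl fun ω _ => ?_
  rw [prb_congr fun ω' => (Prod.ext_iff.trans and_comm :
    (X ω', Z ω') = (X ω, Z ω) ↔ Z ω' = Z ω ∧ X ω' = X ω)]
  ring

lemma condMutInfo_eq_condEnt_add_sub [Fintype α] [Fintype β] (X : Ω → α) (Y : Ω → β) (Z : Ω → γ) :
    condMutInfo μ X Y Z
      = condEnt μ X Z + condEnt μ Y Z - condEnt μ (fun ω => (X ω, Y ω)) Z := by
  simp only [condMutInfo, condEnt, mutInfo, mul_sub, mul_add, sum_sub_distrib, sum_add_distrib]

lemma condMutInfo_comm [Fintype α] [Fintype β] (X : Ω → α) (Y : Ω → β) (Z : Ω → γ) :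
    condMutInfo μ X Y Z = condMutInfo μ Y X Z := by
  simp only [condMutInfo, mutInfo, add_comm (ent _ X)]
  congr! 5
  exact ent_congr fun ω ω' => by simp only [Prod.ext_iff, and_comm]

lemma condMutInfo_eq_condEnt_sub_condEnt [Fintype α] [Fintype β] [Fintype γ] (hμ : ∀ ω, 0 ≤ μ ω)
    (X : Ω → α) (Y : Ω → β) (Z : Ω → γ) :
    condMutInfo μ X Y Z = condEnt μ X Z - condEnt μ X (fun ω => (Y ω, Z ω)) := by
  have hassoc : ent μ (fun ω => ((X ω, Y ω), Z ω)) = ent μ (fun ω => (X ω, (Y ω, Z ω))) :=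
    ent_congr fun ω ω' => by simp only [Prod.ext_iff, and_assoc]
  simp only [condMutInfo_eq_condEnt_add_sub, condEnt_eq_ent_sub_ent hμ, hassoc]
  ring

lemma one_sub_div_le_logb_div {a b : ℝ} (ha : 0 < a) (hb : 0 < b) :
    (1 - b / a) / log 2 ≤ logb 2 (a / b) := by
  have h := one_sub_inv_le_log_of_pos (div_pos ha hb)
  rw [inv_div] at h
  exact div_le_div_of_nonneg_right h (log_pos one_lt_two).le

lemma mutInfo_nonneg [Fintype α] [Fintype β] (hμ : IsPmf μ) (X : Ω → α) (Y : Ω → β) :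
    0 ≤ mutInfo μ X Y := by
  set P : α × β → ℝ := fun w => prb μ fun ω => (X ω, Y ω) = w
  set r : α → ℝ := fun a => prb μ fun ω => X ω = a
  set s : β → ℝ := fun b => prb μ fun ω => Y ω = b
  have hgibbs : ∀ ω, μ ω * (1 - r (X ω) * s (Y ω) / P (X ω, Y ω)) / log 2
      ≤ μ ω * (logb 2 (P (X ω, Y ω)) - logb 2 (r (X ω)) - logb 2 (s (Y ω))) := by
    intro ω
    rcases (hμ.1 ω).eq_or_lt with hμω | hμω
    · simp [← hμω]
    have hP := prb_pos hμ.1 (E := fun ω' => (X ω', Y ω') = (X ω, Y ω)) rfl hμω.ne'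
    have hr := prb_pos hμ.1 (E := fun ω' => X ω' = X ω) rfl hμω.ne'
    have hs := prb_pos hμ.1 (E := fun ω' => Y ω' = Y ω) rfl hμω.ne'
    rw [mul_div_assoc, sub_sub, ← logb_mul hr.ne' hs.ne', ← logb_div hP.ne' (by positivity)]
    exact mul_le_mul_of_nonneg_left (one_sub_div_le_logb_div hP (mul_pos hr hs)) hμω.le
  have hmass : ∑ ω, μ ω * (r (X ω) * s (Y ω) / P (X ω, Y ω)) ≤ 1 := by
    rw [sum_mul_comp (fun ω => (X ω, Y ω)) fun w => r w.1 * s w.2 / P w]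
    calc ∑ w, P w * (r w.1 * s w.2 / P w) ≤ ∑ w : α × β, r w.1 * s w.2 :=
          sum_le_sum fun w _ => by
            rcases eq_or_ne (P w) 0 with h | h
            · simp [h, r, s, mul_nonneg (prb_nonneg hμ.1 _) (prb_nonneg hμ.1 _)]
            · rw [mul_div_cancel₀ _ h]
      _ = 1 := by
        rw [Fintype.sum_prod_type, ← sum_mul_sum]
        simp only [r, s, sum_prb_eq_one hμ, one_mul]
  have hent : mutInfo μ X Y
      = ∑ ω, μ ω * (logb 2 (P (X ω, Y ω)) - logb 2 (r (X ω)) - logb 2 (s (Y ω))) := by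
    simp only [mutInfo, ent_eq_sum, mul_sub, sum_sub_distrib]
    ring
  rw [hent]
  calc (0 : ℝ) ≤ (∑ ω, μ ω - ∑ ω, μ ω * (r (X ω) * s (Y ω) / P (X ω, Y ω))) / log 2 := by
        rw [hμ.2]
        exact div_nonneg (sub_nonneg.2 hmass) (log_pos one_lt_two).le
    _ ≤ _ := by
        simp only [← sum_sub_distrib, sum_div, ← mul_one_sub]
        exact sum_le_sum fun ω _ => hgibbs ω

lemma condMutInfo_nonneg [Fintype α] [Fintype β] (hμ : ∀ ω, 0 ≤ μ ω) (X : Ω → α) (Y : Ω → β)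
    (Z : Ω → γ) : 0 ≤ condMutInfo μ X Y Z := by
  refine sum_nonneg fun z _ => ?_
  rcases (prb_nonneg hμ fun ω => Z ω = z).eq_or_lt with hz | hz
  · simp [← hz]
  · exact mul_nonneg hz.le (mutInfo_nonneg (isPmf_condPmf hμ hz.ne') X Y)

lemma condEnt_congr [Fintype α] [Fintype γ] [Fintype δ] (hμ : ∀ ω, 0 ≤ μ ω) (X : Ω → α)
    {Z : Ω → γ} {Z' : Ω → δ} (h : ∀ ω ω', Z ω = Z ω' ↔ Z' ω = Z' ω') :
    condEnt μ X Z = condEnt μ X Z' := by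
  rw [condEnt_eq_ent_sub_ent hμ, condEnt_eq_ent_sub_ent hμ, ent_congr h]
  congr 1
  exact ent_congr fun ω ω' => by simp only [Prod.ext_iff, h]

lemma condMutInfo_congr [Fintype α] [Fintype β] [Fintype γ] [Fintype δ] (hμ : ∀ ω, 0 ≤ μ ω)
    (X : Ω → α) (Y : Ω → β) {Z : Ω → γ} {Z' : Ω → δ} (h : ∀ ω ω', Z ω = Z ω' ↔ Z' ω = Z' ω') :
    condMutInfo μ X Y Z = condMutInfo μ X Y Z' := by
  rw [condMutInfo_eq_condEnt_sub_condEnt hμ, condMutInfo_eq_condEnt_sub_condEnt hμ,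
    condEnt_congr hμ X h]
  congr 1
  exact condEnt_congr hμ X fun ω ω' => by simp only [Prod.ext_iff, h]

lemma condEnt_le_condEnt_comp [Fintype α] [Fintype γ] [Fintype δ] (hμ : ∀ ω, 0 ≤ μ ω)
    (X : Ω → α) (Z : Ω → γ) (f : γ → δ) : condEnt μ X Z ≤ condEnt μ X (fun ω => f (Z ω)) := by
  have h := condMutInfo_nonneg hμ X Z fun ω => f (Z ω)
  rwa [condMutInfo_eq_condEnt_sub_condEnt hμ, sub_nonneg,
    condEnt_congr hμ X (Z' := Z) fun ω ω' => ⟨congrArg Prod.fst, fun h => by rw [h]⟩] at h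

lemma condMutInfo_comp_le [Fintype α] [Fintype β] [Fintype γ] [Fintype δ] (hμ : ∀ ω, 0 ≤ μ ω)
    (X : Ω → α) (Y : Ω → β) (Z : Ω → γ) (f : β → δ) :
    condMutInfo μ X (fun ω => f (Y ω)) Z ≤ condMutInfo μ X Y Z := by
  rw [condMutInfo_eq_condEnt_sub_condEnt hμ, condMutInfo_eq_condEnt_sub_condEnt hμ]
  linarith [condEnt_le_condEnt_comp hμ X (fun ω => (Y ω, Z ω)) fun p => (f p.1, p.2)]

/-- `q` is a version of the conditional law of `V` given `W`; it is constrained only at values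
taken by `W`. -/
def IsCondLaw (μ : Ω → ℝ) (V : Ω → β) (W : Ω → γ) (q : γ → β → ℝ) : Prop :=
  ∀ ω v, prb μ (fun ω' => W ω' = W ω ∧ V ω' = v) = prb μ (fun ω' => W ω' = W ω) * q (W ω) v

lemma IsCondLaw.prb_eq {V : Ω → β} {W : Ω → γ} {q : γ → β → ℝ} (hq : IsCondLaw μ V W q)
    (w : γ) (v : β) :
    prb μ (fun ω => W ω = w ∧ V ω = v) = prb μ (fun ω => W ω = w) * q w v := by
  by_cases hw : ∃ ω, W ω = w
  · obtain ⟨ω, rfl⟩ := hw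
    exact hq ω v
  · rw [not_exists] at hw
    simp [prb, hw]

lemma IsCondLaw.comp [Fintype γ] {V : Ω → β} {W : Ω → γ} {φ : γ → δ} {q : δ → β → ℝ}
    (hq : IsCondLaw μ V W fun w => q (φ w)) : IsCondLaw μ V (fun ω => φ (W ω)) q := by
  intro ω v
  have hfib : ∀ E : Ω → Prop, prb μ (fun ω' => φ (W ω') = φ (W ω) ∧ E ω')
      = ∑ w, if φ w = φ (W ω) then prb μ (fun ω' => W ω' = w ∧ E ω') else 0 := by
    intro E
    rw [← sum_prb_and W]
    refine sum_congr rfl fun w _ => ?_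
    split_ifs with hw
    · exact prb_congr fun ω' => ⟨fun h => ⟨h.1, h.2.2⟩, fun h => ⟨h.1, h.1 ▸ hw, h.2⟩⟩
    · refine sum_eq_zero fun ω' _ => if_neg ?_
      rintro ⟨rfl, h, -⟩
      exact hw h
  have hmarg := hfib fun _ => True
  simp only [and_true] at hmarg
  rw [hfib, hmarg, sum_mul]
  refine sum_congr rfl fun w _ => ?_
  split_ifs with hw
  · rw [hq.prb_eq, hw]
  · rw [zero_mul]

lemma condEnt_eq_of_isCondLaw [Fintype β] [Fintype γ] (hμ : ∀ ω, 0 ≤ μ ω) {V : Ω → β}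
    {W : Ω → γ} {q : γ → β → ℝ} (hq : IsCondLaw μ V W q) :
    condEnt μ V W = -∑ ω, μ ω * logb 2 (q (W ω) (V ω)) := by
  rw [condEnt_eq_ent_sub_ent hμ, ent_eq_sum, ent_eq_sum, neg_sub_neg, ← sum_sub_distrib,
    ← sum_neg_distrib]
  refine sum_congr rfl fun ω _ => ?_
  by_cases hμω : μ ω = 0
  · simp [hμω]
  have hVW := prb_pos hμ (E := fun ω' => (V ω', W ω') = (V ω, W ω)) rfl hμω
  have hW := prb_pos hμ (E := fun ω' => W ω' = W ω) rfl hμω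
  rw [prb_congr fun ω' => Prod.ext_iff.trans and_comm, hq ω (V ω)] at hVW ⊢
  rw [logb_mul hW.ne' (right_ne_zero_of_mul hVW.ne')]
  ring

lemma condEnt_comp_eq_of_isCondLaw [Fintype β] [Fintype γ] [Fintype δ] (hμ : ∀ ω, 0 ≤ μ ω)
    {V : Ω → β} {W : Ω → γ} (φ : γ → δ) {q : δ → β → ℝ}
    (hq : IsCondLaw μ V W fun w => q (φ w)) :
    condEnt μ V (fun ω => φ (W ω)) = condEnt μ V W := by
  rw [condEnt_eq_of_isCondLaw hμ hq.comp, condEnt_eq_of_isCondLaw hμ hq]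

lemma condMutInfo_le_of_isCondLaw [Fintype α] [Fintype β] [Fintype γ] [Fintype δ] [Fintype ε]
    (hμ : ∀ ω, 0 ≤ μ ω) {X : Ω → α} {V : Ω → β} {Z : Ω → γ} (g : α → γ → δ) (h : γ → ε)
    {q : δ × ε → β → ℝ} (hq : IsCondLaw μ V (fun ω => (X ω, Z ω)) fun w => q (g w.1 w.2, h w.2)) :
    condMutInfo μ X V Z ≤ condMutInfo μ (fun ω => g (X ω) (Z ω)) V (fun ω => h (Z ω)) := by
  rw [condMutInfo_comm, condMutInfo_eq_condEnt_sub_condEnt hμ,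
    condMutInfo_comm (X := fun ω => g _ _), condMutInfo_eq_condEnt_sub_condEnt hμ,
    ← condEnt_comp_eq_of_isCondLaw hμ (fun w : α × γ => (g w.1 w.2, h w.2)) hq]
  linarith [condEnt_le_condEnt_comp hμ V Z h]

end Entropy

section Prefixes

variable {T : ℕ} {β : Type*}

/-- Unlike `prevOut y n`, the type does not depend on `n`, so these prefixes can index the
telescoping sum of the chain rule. -/
def prefixBefore (n : ℕ) (y : Fin T → β) : Fin T → Option β :=
  fun s => if (s : ℕ) < n then some (y s) else none

lemma prefixBefore_eq_iff {n : ℕ} {y y' : Fin T → β} :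
    prefixBefore n y = prefixBefore n y' ↔ ∀ s : Fin T, (s : ℕ) < n → y s = y' s := by
  simp only [prefixBefore, funext_iff]
  refine forall_congr' fun s => ?_
  split_ifs with hs <;> simp [hs]

lemma prefixBefore_injective : Function.Injective (prefixBefore T : (Fin T → β) → _) :=
  fun _ _ h => funext fun s => prefixBefore_eq_iff.1 h s s.isLt

lemma prefixBefore_succ_eq_iff (t : Fin T) {y y' : Fin T → β} :
    prefixBefore (t + 1) y = prefixBefore (t + 1) y'
      ↔ prefixBefore t y = prefixBefore t y' ∧ y t = y' t := by
  simp only [prefixBefore_eq_iff]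
  refine ⟨fun h => ⟨fun s hs => h s (by omega), h t (by omega)⟩, fun ⟨h, ht⟩ s hs => ?_⟩
  rcases (Nat.lt_succ_iff.1 hs).lt_or_eq with hs | hs
  · exact h s hs
  · rwa [Fin.ext hs]

lemma prefixBefore_update_self (t : Fin T) (y : Fin T → β) (c : β) :
    prefixBefore t (Function.update y t c) = prefixBefore t y :=
  prefixBefore_eq_iff.2 fun _ hs => Function.update_of_ne (Fin.ne_of_lt hs) c y

lemma prevOut_eq_iff {t : Fin T} {y y' : Fin T → β} :
    prevOut y t = prevOut y' t ↔ prefixBefore t y = prefixBefore t y' := by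
  rw [prefixBefore_eq_iff, funext_iff]
  exact ⟨fun h s hs => h ⟨s, hs⟩, fun h s => h _ s.isLt⟩

lemma condMutInfo_eq_sum_prefixBefore {Ω α γ : Type*} [Fintype Ω] [Fintype α] [Fintype β]
    [Fintype γ] {μ : Ω → ℝ} (hμ : ∀ ω, 0 ≤ μ ω) (X : Ω → α) (Y : Ω → Fin T → β)
    (Z : Ω → γ) :
    condMutInfo μ X Y Z
      = ∑ t : Fin T, condMutInfo μ X (fun ω => Y ω t) fun ω => (Z ω, prefixBefore t (Y ω)) := by
  set a : ℕ → ℝ := fun n => condEnt μ X fun ω => (Z ω, prefixBefore n (Y ω))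
  have hterm : ∀ t : Fin T, condMutInfo μ X (fun ω => Y ω t)
      (fun ω => (Z ω, prefixBefore t (Y ω))) = a t - a (t + 1) := fun t => by
    rw [condMutInfo_eq_condEnt_sub_condEnt hμ]
    congr 1
    refine condEnt_congr hμ X fun ω ω' => ?_
    simp only [Prod.ext_iff, prefixBefore_succ_eq_iff]
    tauto
  have h0 : a 0 = condEnt μ X Z :=
    condEnt_congr hμ X fun ω ω' => by simp [Prod.ext_iff, prefixBefore_eq_iff]
  have hT : a T = condEnt μ X fun ω => (Y ω, Z ω) :=
    condEnt_congr hμ X fun ω ω' => by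
      simp only [Prod.ext_iff, prefixBefore_injective.eq_iff, and_comm]
  rw [sum_congr rfl fun t _ => hterm t, Fin.sum_univ_eq_sum_range (fun n => a n - a (n + 1)),
    sum_range_sub', h0, hT, condMutInfo_eq_condEnt_sub_condEnt hμ]

def IsCausal (k : Fin T → (Fin T → β) → β → ℝ) : Prop :=
  ∀ (t : Fin T) y y', prefixBefore t y = prefixBefore t y' → k t y = k t y'

variable {k : Fin T → (Fin T → β) → β → ℝ}

lemma prod_filter_lt_succ_update (hk : IsCausal k) (t : Fin T) (y : Fin T → β) (c : β) :
    ∏ s ∈ univ.filter (fun s : Fin T => (s : ℕ) < t + 1),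
        k s (Function.update y t c) (Function.update y t c s)
      = k t y c * ∏ s ∈ univ.filter (fun s : Fin T => (s : ℕ) < t), k s y (y s) := by
  have hset : univ.filter (fun s : Fin T => (s : ℕ) < t + 1)
      = insert t (univ.filter fun s : Fin T => (s : ℕ) < t) := by
    ext s
    simp only [mem_filter, mem_univ, true_and, mem_insert, Fin.ext_iff]
    omega
  rw [hset, prod_insert (by simp), Function.update_self,
    hk t _ _ (prefixBefore_update_self t y c)]
  congr 1
  refine prod_congr rfl fun s hs => ?_
  have hst : s < t := (mem_filter.1 hs).2
  rw [Function.update_of_ne hst.ne, hk s _ y (prefixBefore_eq_iff.2 fun r hr =>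
    Function.update_of_ne (Fin.ne_of_lt (hr.trans hst)) c y)]

lemma sum_prod_of_isCausal [Fintype β] (hk : IsCausal k) (hk1 : ∀ t y, ∑ c, k t y c = 1)
    {n : ℕ} (hn : n ≤ T) (y : Fin T → β) :
    ∑ z ∈ univ.filter (fun z => prefixBefore n z = prefixBefore n y), ∏ s, k s z (z s)
      = ∏ s ∈ univ.filter (fun s : Fin T => (s : ℕ) < n), k s y (y s) := by
  induction hn using Nat.decreasingInduction generalizing y with
  | self =>
    have hy : univ.filter (fun z => prefixBefore T z = prefixBefore T y) = {y} := by
      ext z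
      simp [prefixBefore_injective.eq_iff]
    rw [hy, sum_singleton, filter_true_of_mem fun s _ => s.isLt]
  | of_succ n hn ih =>
    obtain ⟨t, rfl⟩ : ∃ t : Fin T, (t : ℕ) = n := ⟨⟨n, hn⟩, rfl⟩
    -- summing out the outcome at time `t` contributes the factor `∑ c, k t y c = 1`
    rw [← sum_fiberwise _ fun z => z t]
    calc ∑ c, ∑ z ∈ univ.filter (fun z => prefixBefore t z = prefixBefore t y) with z t = c,
          ∏ s, k s z (z s)
        = ∑ c, ∏ s ∈ univ.filter (fun s : Fin T => (s : ℕ) < t + 1),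
            k s (Function.update y t c) (Function.update y t c s) := by
          refine sum_congr rfl fun c _ => ?_
          rw [← ih, filter_filter]
          congr 1
          ext z
          simp only [mem_filter, mem_univ, true_and, prefixBefore_succ_eq_iff t,
            prefixBefore_update_self, Function.update_self]
      _ = ∏ s ∈ univ.filter (fun s : Fin T => (s : ℕ) < t), k s y (y s) := by
          simp only [prod_filter_lt_succ_update hk, ← sum_mul, hk1, one_mul]

end Prefixes

section Genie

variable {N K l T : ℕ} {Y : Type*} {ν : ℕ → Y → ℝ}
  {x : (t : Fin T) → (Fin t.val → Y) → Fin N → Bool}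

def numInPool (p : Finset (Fin N) × (Fin N → Option Bool)) : ℕ :=
  (univ.filter fun i => p.2 i = some true).card

lemma numInPool_XS (S : Finset (Fin N)) (v : Fin N → Bool) :
    numInPool (XS S v) = (S.filter fun i => v i = true).card := by
  unfold numInPool
  congr 1
  ext i
  by_cases hi : i ∈ S <;> simp [XS, hi]

lemma numDef_eq_numInPool_add {L S : Finset (Fin N)} (hLS : L ⊆ S) (y : Fin T → Y)
    (t : Fin T) :
    numDef x S y t
      = numInPool (XS (S \ L) (x t (prevOut y t))) + numInPool (XS L (x t (prevOut y t))) := by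
  rw [numInPool_XS, numInPool_XS, numDef, ← card_union_of_disjoint
    (disjoint_filter_filter sdiff_disjoint), ← filter_union, sdiff_union_of_subset hLS]

lemma isCausal_numDef (S : Finset (Fin N)) : IsCausal fun t y => ν (numDef x S y t) := by
  intro t y y' h
  simp only [numDef, prevOut_eq_iff.2 h]

noncomputable def genieWeight (N K l : ℕ) (L0 : KSets N l) (K0 : KSets N K) : ℝ :=
  if L0.val ⊆ K0.val then (1 / (N.choose l : ℝ)) * (1 / ((N - l).choose (K - l) : ℝ)) else 0

variable [Fintype Y]

lemma geniePmf_apply (L0 : KSets N l) (K0 : KSets N K) (y : Fin T → Y) :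
    geniePmf N K l T Y ν x (L0, K0, y)
      = genieWeight N K l L0 K0 * ∏ t, ν (numDef x K0.val y t) (y t) := rfl

lemma geniePmf_nonneg (hν : ∀ k c, 0 ≤ ν k c) (ω : KSets N l × KSets N K × (Fin T → Y)) :
    0 ≤ geniePmf N K l T Y ν x ω :=
  mul_nonneg (by split_ifs <;> positivity) (prod_nonneg fun _ _ => hν _ _)

lemma prb_geniePmf_prefixBefore (hν1 : ∀ k, ∑ c, ν k c = 1) (L0 : KSets N l) (K0 : KSets N K)
    {n : ℕ} (hn : n ≤ T) (y : Fin T → Y) :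
    prb (geniePmf N K l T Y ν x)
        (fun ω => ω.1 = L0 ∧ ω.2.1 = K0 ∧ prefixBefore n ω.2.2 = prefixBefore n y)
      = genieWeight N K l L0 K0
          * ∏ s ∈ univ.filter (fun s : Fin T => (s : ℕ) < n), ν (numDef x K0.val y s) (y s) := by
  rw [← sum_prod_of_isCausal (isCausal_numDef K0.val) (fun _ _ => hν1 _) hn, mul_sum]
  simp only [prb, Fintype.sum_prod_type, sum_filter]
  rw [Fintype.sum_eq_single L0 ?_, Fintype.sum_eq_single K0 ?_]
  · refine sum_congr rfl fun z _ => ?_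
    simp [geniePmf_apply]
  · exact fun K' hK => sum_eq_zero fun _ _ => if_neg fun h => hK h.2.1
  · exact fun L hL => sum_eq_zero fun _ _ => sum_eq_zero fun _ _ => if_neg fun h => hL h.1

lemma isCondLaw_geniePmf (hν1 : ∀ k, ∑ c, ν k c = 1) (t : Fin T) :
    IsCondLaw (geniePmf N K l T Y ν x) (fun ω => ω.2.2 t)
      (fun ω => (ω.2.1, (ω.1, prevOut ω.2.2 t)))
      fun w => ν (numInPool (XS (w.1.val \ w.2.1.val) (x t w.2.2))
        + numInPool (XS w.2.1.val (x t w.2.2))) := by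
  rintro ⟨L0, K0, y⟩ c
  have hpast : prb (geniePmf N K l T Y ν x)
        (fun ω => (ω.2.1, (ω.1, prevOut ω.2.2 t)) = (K0, (L0, prevOut y t)))
      = prb (geniePmf N K l T Y ν x)
          (fun ω => ω.1 = L0 ∧ ω.2.1 = K0 ∧ prefixBefore t ω.2.2 = prefixBefore t y) :=
    prb_congr fun ω => by simp only [Prod.ext_iff, prevOut_eq_iff]; tauto
  have hnext : prb (geniePmf N K l T Y ν x)
        (fun ω => (ω.2.1, (ω.1, prevOut ω.2.2 t)) = (K0, (L0, prevOut y t)) ∧ ω.2.2 t = c)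
      = prb (geniePmf N K l T Y ν x) (fun ω => ω.1 = L0 ∧ ω.2.1 = K0
          ∧ prefixBefore (t + 1) ω.2.2 = prefixBefore (t + 1) (Function.update y t c)) :=
    prb_congr fun ω => by
      simp only [Prod.ext_iff, prevOut_eq_iff, prefixBefore_succ_eq_iff,
        prefixBefore_update_self, Function.update_self]
      tauto
  rw [hnext, hpast, prb_geniePmf_prefixBefore hν1 _ _ t.isLt,
    prb_geniePmf_prefixBefore hν1 _ _ t.isLt.le, prod_filter_lt_succ_update (isCausal_numDef _)]
  by_cases hLK : L0.val ⊆ K0.val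
  · rw [numDef_eq_numInPool_add hLK]
    ring
  · simp [genieWeight, hLK]

lemma condMutInfo_geniePmf_le (hν : ∀ k, IsPmf (ν k)) (t : Fin T) :
    condMutInfo (geniePmf N K l T Y ν x) (fun ω => ω.2.1) (fun ω => ω.2.2 t)
        (fun ω => (ω.1, prefixBefore t ω.2.2))
      ≤ condMutInfo (geniePmf N K l T Y ν x)
          (fun ω => XS (ω.2.1.val \ ω.1.val) (x t (prevOut ω.2.2 t)))
          (fun ω => ω.2.2 t)
          (fun ω => XS ω.1.val (x t (prevOut ω.2.2 t))) := by
  have hμ : ∀ ω, 0 ≤ geniePmf N K l T Y ν x ω := geniePmf_nonneg fun k => (hν k).1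
  rw [condMutInfo_congr hμ _ _ (Z' := fun ω => (ω.1, prevOut ω.2.2 t)) fun ω ω' => by
    simp only [Prod.ext_iff, prevOut_eq_iff]]
  exact (condMutInfo_le_of_isCondLaw hμ
    (fun (K0 : KSets N K) (p : KSets N l × (Fin t → Y)) => XS (K0.val \ p.1.val) (x t p.2))
    (fun p => XS p.1.val (x t p.2)) (q := fun d => ν (numInPool d.1 + numInPool d.2))
    (isCondLaw_geniePmf (fun k => (hν k).2) t) :)

end Genie

theorem mutual_info_le_sum_conditional_mutual_info_general
    (N K l T : ℕ) (Y : Type*) [Fintype Y]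
    (ν : ℕ → Y → ℝ) (hν : ∀ k, IsPmf (ν k))
    (x : (t : Fin T) → (Fin t.val → Y) → Fin N → Bool)
    (Khat : (Fin T → Y) → KSets N K) :
    condMutInfo (geniePmf N K l T Y ν x)
        (fun ω => ω.2.1) (fun ω => Khat ω.2.2) (fun ω => ω.1)
      ≤ ∑ t : Fin T,
          condMutInfo (geniePmf N K l T Y ν x)
            (fun ω => XS (ω.2.1.val \ ω.1.val) (x t (prevOut ω.2.2 t)))
            (fun ω => ω.2.2 t)
            (fun ω => XS ω.1.val (x t (prevOut ω.2.2 t))) := by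
  have hμ : ∀ ω, 0 ≤ geniePmf N K l T Y ν x ω := geniePmf_nonneg fun k => (hν k).1
  calc _ ≤ condMutInfo (geniePmf N K l T Y ν x)
          (fun ω => ω.2.1) (fun ω => ω.2.2) (fun ω => ω.1) :=
        condMutInfo_comp_le hμ _ _ _ Khat
    _ = _ := condMutInfo_eq_sum_prefixBefore hμ _ _ _
    _ ≤ _ := sum_le_sum fun t _ => condMutInfo_geniePmf_le hν t

/-- In the adaptive group testing model with the genie construction of `𝓛` and
`𝒦`, and an estimator `K̂ = K̂(Y_1,…,Y_T)`,
`I(𝒦 : K̂ ∣ 𝓛) ≤ Σ_{t=1}^T I( X_{𝒦∖𝓛,t} : Y_t ∣ X_{𝓛,t} )`. -/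
theorem mutual_info_le_sum_conditional_mutual_info
    (N K l T : ℕ) (hlK : l < K) (hKN : K ≤ N) (Y : Type*) [Fintype Y]
    (ν : ℕ → Y → ℝ) (hν : ∀ k, IsPmf (ν k))
    (x : (t : Fin T) → (Fin t.val → Y) → Fin N → Bool)
    (Khat : (Fin T → Y) → KSets N K) :
    condMutInfo (geniePmf N K l T Y ν x)
        (fun ω => ω.2.1) (fun ω => Khat ω.2.2) (fun ω => ω.1)
      ≤ ∑ t : Fin T,
          condMutInfo (geniePmf N K l T Y ν x)
            (fun ω => XS (ω.2.1.val \ ω.1.val) (x t (prevOut ω.2.2 t)))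
            (fun ω => ω.2.2 t)
            (fun ω => XS ω.1.val (x t (prevOut ω.2.2 t))) :=
  mutual_info_le_sum_conditional_mutual_info_general N K l T Y ν hν x Khat
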